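/- Let m be even and 0 ≤ i < m. The permutation of Fin m that reverses the first m - i entries and reverses the last i entries has m/2 cycles (all transpositions) if i is even, and (m+2)/2 cycles ((m-2)/2 transpositions and two fixed points) if i is odd. -/
import Mathlib

/-- Quotient by the graph of an involution is equivalent to the set of
canonical (smaller) representatives. -/
theorem quot_invol_card {α : Type*} [LinearOrder α] (f : α → α) (hf : ∀ a, f (f a) = a) :
    Nat.card (Quot (fun a b => b = f a)) = Nat.card {a : α // a ≤ f a} := by
  apply Nat.card_congr
  refine ⟨Quot.lift
      (fun a => if h : a ≤ f a then (⟨a, h⟩ : {a : α // a ≤ f a})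
        else ⟨f a, by rw [hf]; exact (not_le.1 h).le⟩) ?_,
    fun s => Quot.mk _ s.1, ?_, ?_⟩
  · rintro a b rfl
    have h2 := hf a
    beta_reduce
    split_ifs with h1 h3 h3
    · exact Subtype.ext (le_antisymm h1 (by rwa [hf] at h3))
    · exact Subtype.ext (hf a).symm
    · rfl
    · rw [hf] at h3; exact absurd (le_of_not_ge h1) h3
  · intro q
    induction q using Quot.ind with
    | _ a =>
      simp only
      split_ifs with h1
      · rfl
      · exact Quot.sound (hf a).symm
  · intro s
    simp only [dif_pos s.2]

/-- For `m` even and `0 ≤ i < m`, the permutation of `Fin m` reversing the first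
`m - i` entries and reversing the last `i` entries has `m/2` cycles if `i` is even,
and `(m+2)/2` cycles if `i` is odd. -/
theorem cycles_reflection_even (m i : ℕ) (hm : Even m) (hi : i < m) :
    Nat.card (Quot (fun a b : Fin m =>
        b = if h : (a : ℕ) < m - i
            then (⟨m - i - 1 - a, by have := a.isLt; omega⟩ : Fin m)
            else ⟨2 * m - i - 1 - a, by have := a.isLt; omega⟩))
      = if Even i then m / 2 else (m + 2) / 2 := by
  have hcard := quot_invol_card (α := Fin m)
    (f := fun a => if h : (a : ℕ) < m - i
            then (⟨m - i - 1 - a, by have := a.isLt; omega⟩ : Fin m)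
            else ⟨2 * m - i - 1 - a, by have := a.isLt; omega⟩)
    (by
      intro a
      have ha := a.isLt
      apply Fin.ext
      split_ifs with h1 h2 h2 <;>
        simp only [Fin.val_mk] at h1 h2 ⊢ <;> omega)
  rw [hcard]
  rw [Nat.card_eq_fintype_card, Fintype.card_subtype]
  have hbij : (Finset.univ.filter (fun a : Fin m => a ≤
        if h : (a : ℕ) < m - i
            then (⟨m - i - 1 - a, by have := a.isLt; omega⟩ : Fin m)
            else ⟨2 * m - i - 1 - a, by have := a.isLt; omega⟩)).card
      = ((Finset.range m).filter (fun n =>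
          (n < m - i ∧ 2 * n + 1 ≤ m - i) ∨ (m - i ≤ n ∧ 2 * n + 1 ≤ 2 * m - i))).card := by
    refine Finset.card_bij (fun (a : Fin m) _ => (a : ℕ)) ?_ ?_ ?_
    · intro a ha
      simp only [Finset.mem_filter, Finset.mem_univ, true_and, Fin.le_def] at ha
      simp only [Finset.mem_filter, Finset.mem_range]
      refine ⟨a.isLt, ?_⟩
      split_ifs at ha with h <;> simp only at ha <;> omega
    · intro a _ b _ h
      exact Fin.ext h
    · intro n hn
      simp only [Finset.mem_filter, Finset.mem_range] at hn
      refine ⟨⟨n, hn.1⟩, ?_, rfl⟩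
      simp only [Finset.mem_filter, Finset.mem_univ, true_and, Fin.le_def]
      split_ifs with h <;> simp only <;> omega
  rw [hbij]
  have hsplit : ((Finset.range m).filter (fun n =>
          (n < m - i ∧ 2 * n + 1 ≤ m - i) ∨ (m - i ≤ n ∧ 2 * n + 1 ≤ 2 * m - i)))
      = Finset.range ((m - i + 1) / 2) ∪ Finset.Ico (m - i) (m - i + (i + 1) / 2) := by
    ext n
    simp only [Finset.mem_filter, Finset.mem_range, Finset.mem_union, Finset.mem_Ico]
    omega
  rw [hsplit, Finset.card_union_of_disjoint, Finset.card_range, Nat.card_Ico]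
  · rw [Nat.even_iff] at hm
    split_ifs with h
    · rw [Nat.even_iff] at h; omega
    · rw [Nat.not_even_iff] at h; omega
  · rw [Finset.disjoint_left]
    intro n hn hn'
    simp only [Finset.mem_range] at hn
    simp only [Finset.mem_Ico] at hn'
    omega
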